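/- arXiv:2002.02230 — 6 statements merged into one kernel-verified Lean document; each statement's English description precedes it below -/
import Mathlib

section
/- Let H be an infinite-dimensional complex Hilbert space, let φ : B₊(H) → B₊(H) be a map, and let T : H → H be a bounded, invertible, linear operator such that ran φ(A)^{1/2} = ran(T A^{1/2}) for all A ∈ B₊(H). Then for every A ∈ B₊(H) there exists an invertible positive operator Z_A ∈ B₊(H) such that φ(A) = (TAT*)^{1/2} Z_A (TAT*)^{1/2}. -/
/-!
Since `(T A^{1/2})(T A^{1/2})^* = TAT^* = B^{1/2} B^{1/2}` for `B = TAT^*`, Douglas' lemma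
gives `ran (T A^{1/2}) = ran B^{1/2}`, so `p = φ(A)^{1/2}` and `b = B^{1/2}` have the same range.
Douglas' lemma again factors `p = b C` and `b = p D`; hence `φ(A) = b C C^* b`, and `C^*` is
bounded below on `closure (ran b)` because `D^* C^*` fixes `ran b`. Compressing `C C^*` to
that closure and adding the complementary projection gives a coercive, hence invertible,
positive `Z` with `b Z b = b C C^* b`.
-/

set_option synthInstance.maxHeartbeats 1000000
set_option maxHeartbeats 1000000

open ContinuousLinearMap Filter Topology

variable {H : Type} [NormedAddCommGroup H] [InnerProductSpace ℂ H] [CompleteSpace H]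

/-- The Loewner order on bounded operators: `A ≤ B` iff `B - A` is positive. -/
def Loewner (A B : H →L[ℂ] H) : Prop := (B - A).IsPositive

/-- `A` is `B`-absolutely continuous: `A` is the strong-operator-topology limit of a
monotone increasing sequence of positive operators, each dominated by a nonnegative
multiple of `B`. -/
def AbsCont (A B : H →L[ℂ] H) : Prop :=
  ∃ f : ℕ → H →L[ℂ] H,
    (∀ n, (f n).IsPositive) ∧
    (∀ m n, m ≤ n → Loewner (f m) (f n)) ∧
    (∀ n, ∃ c : ℝ, 0 ≤ c ∧ Loewner (f n) (c • B)) ∧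
    (∀ x : H, Tendsto (fun n => f n x) atTop (𝓝 (A x)))

/-- `A` and `B` are singular: the only positive operator below both (in the Loewner
order) is `0`. -/
def Singular (A B : H →L[ℂ] H) : Prop :=
  ∀ C : H →L[ℂ] H, C.IsPositive → Loewner C A → Loewner C B → C = 0

/-- An operator range: a subspace which is the range of some bounded operator. -/
def IsOpRange (M : Submodule ℂ H) : Prop := ∃ S : H →L[ℂ] H, LinearMap.range (S : H →ₗ[ℂ] H) = M

section

variable {𝕜 E F G : Type*} [RCLike 𝕜]
  [NormedAddCommGroup E] [InnerProductSpace 𝕜 E] [CompleteSpace E]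
  [NormedAddCommGroup F] [InnerProductSpace 𝕜 F]
  [NormedAddCommGroup G] [InnerProductSpace 𝕜 G] [CompleteSpace G]

theorem exists_eq_comp_of_range_subset {S : E →L[𝕜] F} {R : G →L[𝕜] F}
    (h : Set.range S ⊆ Set.range R) : ∃ C : E →L[𝕜] G, S = R ∘L C := by
  set K := LinearMap.ker (R : G →ₗ[𝕜] F)
  have : CompleteSpace K := R.isClosed_ker.completeSpace_coe
  have hinj : ∀ z ∈ Kᗮ, ∀ z' ∈ Kᗮ, R z = R z' → z = z' := fun z hz z' hz' hRz ↦ by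
    rw [← sub_eq_zero, ← Submodule.mem_bot 𝕜, ← K.inf_orthogonal_eq_bot]
    exact ⟨by simp [K, hRz], Kᗮ.sub_mem hz hz'⟩
  have hlift : ∀ x, ∃ z ∈ Kᗮ, R z = S x := fun x ↦ by
    obtain ⟨w, hw⟩ := h ⟨x, rfl⟩
    refine ⟨w - K.starProjection w, K.sub_starProjection_mem_orthogonal w, ?_⟩
    rw [map_sub, hw, sub_eq_self]
    exact K.starProjection_apply_mem w
  choose c hcK hc using hlift
  let C : E →ₗ[𝕜] G :=
    { toFun := c
      map_add' := fun x y ↦ hinj _ (hcK _) _ (Kᗮ.add_mem (hcK x) (hcK y)) (by simp [hc])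
      map_smul' := fun a x ↦ hinj _ (hcK _) _ (Kᗮ.smul_mem a (hcK x)) (by simp [hc]) }
  have hC : Continuous C := C.continuous_of_seq_closed_graph fun u x y hu hCu ↦
    hinj _ (K.isClosed_orthogonal.mem_of_tendsto hCu (.of_forall fun n ↦ hcK (u n))) _ (hcK x) <|
      tendsto_nhds_unique ((R.continuous.tendsto y).comp hCu) <| by
        simpa [Function.comp_def, C, hc] using (S.continuous.tendsto x).comp hu
  exact ⟨⟨C, hC⟩, ext fun x ↦ (hc x).symm⟩

variable [CompleteSpace F]

theorem range_subset_range_of_norm_adjoint_le {S : E →L[𝕜] F} {R : G →L[𝕜] F}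
    (h : ∀ y, ‖adjoint S y‖ ≤ ‖adjoint R y‖) : Set.range S ⊆ Set.range R := by
  set r : F →ₗ[𝕜] G := (adjoint R).toLinearMap with hr
  have hker : LinearMap.ker r ≤ LinearMap.ker (adjoint S : F →ₗ[𝕜] E) := fun y hy ↦
    norm_le_zero_iff.mp <| (h y).trans_eq <| by simpa [hr] using hy
  let g : LinearMap.range r →ₗ[𝕜] E :=
    (LinearMap.ker r).liftQ (adjoint S : F →ₗ[𝕜] E) hker ∘ₗ r.quotKerEquivRange.symm
  have hg : ∀ y, g ⟨r y, r.mem_range_self y⟩ = adjoint S y := fun y ↦ by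
    simp only [g, LinearMap.comp_apply, LinearEquiv.coe_coe]
    rw [r.quotKerEquivRange_symm_apply_image y]
    rfl
  have hg_le : ∀ m, ‖g m‖ ≤ 1 * ‖m‖ := by
    rintro ⟨_, y, rfl⟩
    rw [one_mul, hg]
    exact h y
  rintro _ ⟨x, rfl⟩
  -- the preimage is the Riesz representative of a Hahn–Banach extension of `R† y ↦ ⟪x, S† y⟫`
  obtain ⟨f, hf, -⟩ := exists_extension_norm_eq _ ((innerSL 𝕜 x).comp (g.mkContinuous 1 hg_le))
  refine ⟨(InnerProductSpace.toDual 𝕜 G).symm f, ext_inner_right 𝕜 fun y ↦ ?_⟩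
  rw [← adjoint_inner_right, InnerProductSpace.toDual_symm_apply, ← adjoint_inner_right]
  exact (hf ⟨r y, r.mem_range_self y⟩).trans (by simp [hg])

theorem range_eq_range_of_comp_adjoint_eq {S : E →L[𝕜] F} {R : G →L[𝕜] F}
    (h : S ∘L adjoint S = R ∘L adjoint R) : Set.range S = Set.range R := by
  have hnorm : ∀ y, ‖adjoint S y‖ = ‖adjoint R y‖ := fun y ↦ by
    simp only [apply_norm_eq_sqrt_inner_adjoint_left, adjoint_adjoint, h]
  exact (range_subset_range_of_norm_adjoint_le fun y ↦ (hnorm y).le).antisymm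
    (range_subset_range_of_norm_adjoint_le fun y ↦ (hnorm y).ge)

theorem isUnit_adjoint_comp_add_starProjection_orthogonal (K : Submodule 𝕜 E)
    [K.HasOrthogonalProjection] (W : E →L[𝕜] F) {c : ℝ} (hK : ∀ y ∈ K, ‖y‖ ≤ c * ‖W y‖) :
    IsUnit (adjoint (W ∘L K.starProjection) ∘L (W ∘L K.starProjection) + Kᗮ.starProjection) := by
  set Z := adjoint (W ∘L K.starProjection) ∘L (W ∘L K.starProjection) + Kᗮ.starProjection
  have hc : (0 : ℝ) < (c ^ 2 + 1)⁻¹ := by positivity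
  refine isUnit_of_forall_le_norm_inner_map Z (c := ⟨_, hc.le⟩) hc fun x ↦ ?_
  have hx := K.norm_sq_eq_add_norm_sq_projection x
  set y := K.orthogonalProjectionOnto x
  set z := Kᗮ.orthogonalProjectionOnto x
  have hy : ‖y‖ ^ 2 ≤ c ^ 2 * ‖W y‖ ^ 2 := by
    rw [← mul_pow]
    exact pow_le_pow_left₀ (norm_nonneg _) (hK y y.2) 2
  have hre : RCLike.re (inner 𝕜 (Z x) x) = ‖W y‖ ^ 2 + ‖z‖ ^ 2 := by
    rw [add_apply, inner_add_left, map_add, ← apply_norm_sq_eq_inner_adjoint_left,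
      Submodule.re_inner_starProjection_eq_normSq]
    rfl
  calc ‖x‖ ^ 2 * (⟨_, hc.le⟩ : NNReal) = ‖x‖ ^ 2 / (c ^ 2 + 1) := rfl
    _ ≤ ‖W y‖ ^ 2 + ‖z‖ ^ 2 := by
      rw [div_le_iff₀ (by positivity)]
      nlinarith [sq_nonneg c, sq_nonneg ‖W y‖, sq_nonneg ‖z‖]
    _ ≤ _ := hre ▸ RCLike.re_le_norm _

theorem exists_isPositive_isUnit_mul_mul_eq_of_norm_le {b : E →L[𝕜] E} (hb : IsSelfAdjoint b)
    (W : E →L[𝕜] F) {c : ℝ} (h : ∀ x, ‖b x‖ ≤ c * ‖W (b x)‖) :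
    ∃ Z : E →L[𝕜] E, Z.IsPositive ∧ IsUnit Z ∧ b * Z * b = b * (adjoint W ∘L W) * b := by
  set K := (LinearMap.range (b : E →ₗ[𝕜] E)).topologicalClosure
  set Q := K.starProjection
  have hK : (K : Set E) ⊆ {y | ‖y‖ ≤ c * ‖W y‖} := by
    rw [Submodule.topologicalClosure_coe]
    refine closure_minimal ?_ <|
      isClosed_le continuous_norm (continuous_const.mul (continuous_norm.comp W.continuous))
    rintro _ ⟨x, rfl⟩
    exact h x
  have hQb : Q * b = b := ext fun x ↦ K.starProjection_eq_self_iff.mpr <|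
    Submodule.le_topologicalClosure _ (LinearMap.mem_range_self _ x)
  have hbQ : b * Q = b := by
    have := congrArg star hQb
    rwa [star_mul, hb.star_eq, (isSelfAdjoint_starProjection K).star_eq] at this
  have hQWWQ : adjoint (W ∘L Q) ∘L (W ∘L Q) = Q * (adjoint W ∘L W) * Q := by
    rw [adjoint_comp, (isSelfAdjoint_starProjection K).adjoint_eq]
    rfl
  refine ⟨adjoint (W ∘L Q) ∘L (W ∘L Q) + Kᗮ.starProjection,
    (isPositive_adjoint_comp_self _).add (.of_isStarProjection isStarProjection_starProjection),
    isUnit_adjoint_comp_add_starProjection_orthogonal K W fun y hy ↦ hK hy, ?_⟩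
  rw [hQWWQ, K.starProjection_orthogonal']
  calc b * (Q * (adjoint W ∘L W) * Q + (1 - Q)) * b
      = (b * Q) * (adjoint W ∘L W) * (Q * b) + (b * b - (b * Q) * b) := by noncomm_ring
    _ = b * (adjoint W ∘L W) * b := by rw [hbQ, hQb, sub_self, add_zero]

end

theorem adjoint_sqrt (X : H →L[ℂ] H) : adjoint (CFC.sqrt X) = CFC.sqrt X :=
  (IsSelfAdjoint.of_nonneg (CFC.sqrt_nonneg X)).adjoint_eq

theorem exists_isPositive_isUnit_eq_sqrt_mul_mul_sqrt {P B : H →L[ℂ] H} (hP : P.IsPositive)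
    (hPB : Set.range ⇑(CFC.sqrt P) = Set.range ⇑(CFC.sqrt B)) :
    ∃ Z : H →L[ℂ] H, Z.IsPositive ∧ IsUnit Z ∧ P = CFC.sqrt B * Z * CFC.sqrt B := by
  set p := CFC.sqrt P
  set b := CFC.sqrt B
  have hp : adjoint p = p := adjoint_sqrt P
  have hb : IsSelfAdjoint b := .of_nonneg (CFC.sqrt_nonneg B)
  obtain ⟨C, hC⟩ := exists_eq_comp_of_range_subset hPB.subset
  obtain ⟨D, hD⟩ := exists_eq_comp_of_range_subset hPB.symm.subset
  have hCb : adjoint C * b = p := by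
    rw [← hp, hC, adjoint_comp, hb.adjoint_eq]
    rfl
  have hDp : adjoint D * p = b := by
    rw [← hb.adjoint_eq, hD, adjoint_comp, hp]
    rfl
  obtain ⟨Z, hZ, hZu, hbZb⟩ := exists_isPositive_isUnit_mul_mul_eq_of_norm_le hb (adjoint C)
    (c := ‖adjoint D‖) fun x ↦ calc
      ‖b x‖ = ‖adjoint D (adjoint C (b x))‖ := by
        rw [show adjoint C (b x) = p x from congr($hCb x),
          show adjoint D (p x) = b x from congr($hDp x)]
      _ ≤ ‖adjoint D‖ * ‖adjoint C (b x)‖ := le_opNorm _ _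
  refine ⟨Z, hZ, hZu, ?_⟩
  rw [hbZb, adjoint_adjoint]
  calc P = p * p := (CFC.sqrt_mul_sqrt_self P ((nonneg_iff_isPositive P).mpr hP)).symm
    _ = (b * C) * (adjoint C * b) := by rw [hCb]; nth_rw 1 [hC]; rfl
    _ = b * (C ∘L adjoint C) * b := by noncomm_ring

theorem stmt2_general
    (φ : (H →L[ℂ] H) → (H →L[ℂ] H))
    (hmaps : ∀ A : H →L[ℂ] H, A.IsPositive → (φ A).IsPositive)
    (T : H ≃L[ℂ] H)
    (hran : ∀ A : H →L[ℂ] H, A.IsPositive →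
        Set.range ⇑(CFC.sqrt (φ A)) = Set.range ⇑((T : H →L[ℂ] H) * CFC.sqrt A)) :
    ∀ A : H →L[ℂ] H, A.IsPositive → ∃ Z : H →L[ℂ] H, Z.IsPositive ∧ IsUnit Z ∧
      φ A = CFC.sqrt ((T : H →L[ℂ] H) * A * adjoint (T : H →L[ℂ] H)) * Z *
        CFC.sqrt ((T : H →L[ℂ] H) * A * adjoint (T : H →L[ℂ] H)) := by
  intro A hA
  set B := (T : H →L[ℂ] H) * A * adjoint (T : H →L[ℂ] H)
  have hB : B.IsPositive := hA.conj_adjoint _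
  refine exists_isPositive_isUnit_eq_sqrt_mul_mul_sqrt (hmaps A hA) ?_
  rw [hran A hA]
  apply range_eq_range_of_comp_adjoint_eq
  change _ * adjoint ((T : H →L[ℂ] H) ∘L CFC.sqrt A) = CFC.sqrt B * adjoint (CFC.sqrt B)
  rw [adjoint_comp, adjoint_sqrt, adjoint_sqrt, CFC.sqrt_mul_sqrt_self B ((nonneg_iff_isPositive B).mpr hB)]
  change (T : H →L[ℂ] H) * (CFC.sqrt A * CFC.sqrt A) * adjoint (T : H →L[ℂ] H) = B
  rw [CFC.sqrt_mul_sqrt_self A ((nonneg_iff_isPositive A).mpr hA)]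

/-- If `ran φ(A)^{1/2} = ran (T A^{1/2})` for a bounded invertible linear
`T`, then `φ(A) = (TAT*)^{1/2} Z_A (TAT*)^{1/2}` for some invertible positive `Z_A`. -/
theorem stmt2 (hinf : ¬ FiniteDimensional ℂ H)
    (φ : (H →L[ℂ] H) → (H →L[ℂ] H))
    (hmaps : ∀ A : H →L[ℂ] H, A.IsPositive → (φ A).IsPositive)
    (T : H ≃L[ℂ] H)
    (hran : ∀ A : H →L[ℂ] H, A.IsPositive →
        Set.range ⇑(CFC.sqrt (φ A)) = Set.range ⇑((T : H →L[ℂ] H) * CFC.sqrt A)) :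
    ∀ A : H →L[ℂ] H, A.IsPositive → ∃ Z : H →L[ℂ] H, Z.IsPositive ∧ IsUnit Z ∧
      φ A = CFC.sqrt ((T : H →L[ℂ] H) * A * adjoint (T : H →L[ℂ] H)) * Z *
        CFC.sqrt ((T : H →L[ℂ] H) * A * adjoint (T : H →L[ℂ] H)) :=
  stmt2_general φ hmaps T hran
end

section
/- Let H be an infinite-dimensional complex Hilbert space and let φ : B₊(H) → B₊(H) be a bijective map that preserves absolute continuity in both directions. Then φ preserves singularity in both directions. -/
open ContinuousLinearMap Filter Topology

variable {H : Type} [NormedAddCommGroup H] [InnerProductSpace ℂ H] [CompleteSpace H]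

/-!
Singularity can be expressed through `≪` alone: `A ⊥ B` iff no atom of the preorder `≪` on the
positive cone is absolutely continuous with respect to both `A` and `B`. The atoms are exactly the
nonzero rank-one operators `x ⊗ x`. The key point is that every positive operator below a multiple
of `x ⊗ x` is itself a multiple of it, so a rank-one `R ≪ A` already satisfies `R ≤ c • A`, and a
common atom below `A` and `B` yields a nonzero positive operator below both. A bijection of the
cone preserving `≪` in both directions preserves `0` and the atoms, hence singularity.
-/

open InnerProductSpace
open scoped InnerProductSpace ComplexOrder

section PositiveOperators

variable {𝕜 E : Type*} [RCLike 𝕜] [NormedAddCommGroup E] [InnerProductSpace 𝕜 E]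

theorem ContinuousLinearMap.isPositive_of_tendsto {ι : Type*} {l : Filter ι} [l.NeBot]
    {f : ι → E →L[𝕜] E} {T : E →L[𝕜] E} (hf : ∀ᶠ i in l, (f i).IsPositive)
    (hT : ∀ x, Tendsto (fun i => f i x) l (𝓝 (T x))) : T.IsPositive := by
  refine (isPositive_iff T).2 ⟨fun x y => ?_, fun x => ?_⟩
  · refine tendsto_nhds_unique ((hT x).inner tendsto_const_nhds) ?_
    refine (tendsto_const_nhds.inner (hT y)).congr' (hf.mono fun i hi => ?_)
    exact (hi.inner_left_eq_inner_right x y).symm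
  · exact ge_of_tendsto ((hT x).inner tendsto_const_nhds)
      (hf.mono fun i hi => hi.inner_nonneg_left x)

theorem ContinuousLinearMap.le_of_tendsto_of_monotone {f : ℕ → E →L[𝕜] E} {T : E →L[𝕜] E}
    (hf : Monotone f) (hT : ∀ x, Tendsto (fun n => f n x) atTop (𝓝 (T x))) (n : ℕ) :
    f n ≤ T :=
  isPositive_of_tendsto (f := fun m => f m - f n) (eventually_atTop.2 ⟨n, fun _ hm => hf hm⟩)
    fun x => (hT x).sub tendsto_const_nhds

theorem ContinuousLinearMap.le_of_re_inner_le {S T : E →L[𝕜] E} (hS : S.IsSymmetric)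
    (hT : T.IsSymmetric) (h : ∀ x, RCLike.re ⟪S x, x⟫_𝕜 ≤ RCLike.re ⟪T x, x⟫_𝕜) : S ≤ T :=
  ⟨hT.sub hS, fun x => by
    simpa [reApplyInnerSelf, inner_sub_left] using sub_nonneg.2 (h x)⟩

end PositiveOperators

theorem inv_smul_le_of_le_smul {M : Type*} [AddCommGroup M] [PartialOrder M]
    [IsOrderedAddMonoid M] [Module ℝ M] [PosSMulMono ℝ M] [SMulPosMono ℝ M] {R X : M}
    (hX : 0 ≤ X) {δ γ : ℝ} (hδ : δ ≤ γ) (hγ : 0 < γ) (h : R ≤ δ • X) : γ⁻¹ • R ≤ X :=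
  calc γ⁻¹ • R ≤ γ⁻¹ • δ • X := smul_le_smul_of_nonneg_left h (inv_nonneg.2 hγ.le)
    _ ≤ γ⁻¹ • γ • X :=
      smul_le_smul_of_nonneg_left (smul_le_smul_of_nonneg_right hδ hX) (inv_nonneg.2 hγ.le)
    _ = X := inv_smul_smul₀ hγ.ne' X

section RankOne

variable {E : Type*} [NormedAddCommGroup E] [InnerProductSpace ℂ E]

theorem re_inner_rankOne_self_apply (v y : E) :
    RCLike.re ⟪rankOne ℂ v v y, y⟫_ℂ = ‖⟪v, y⟫_ℂ‖ ^ 2 := by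
  rw [rankOne_apply, inner_smul_left, RCLike.conj_mul]
  norm_cast

theorem re_inner_real_smul_apply (c : ℝ) (T : E →L[ℂ] E) (y : E) :
    RCLike.re ⟪(c • T) y, y⟫_ℂ = c * RCLike.re ⟪T y, y⟫_ℂ := by
  rw [smul_apply, RCLike.real_smul_eq_coe_smul (K := ℂ), inner_smul_real_left, RCLike.smul_re]

theorem smul_rankOne_self {s : ℝ} (hs : 0 ≤ s) (v : E) :
    s • rankOne ℂ v v = rankOne ℂ (Real.sqrt s • v) (Real.sqrt s • v) := by
  have hsqrt : (Real.sqrt s : ℂ) * Real.sqrt s = s := by exact_mod_cast Real.mul_self_sqrt hs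
  ext y
  simp only [smul_apply, rankOne_apply, RCLike.real_smul_eq_coe_smul (K := ℂ), inner_smul_left,
    RCLike.conj_ofReal, smul_smul]
  congr 1
  linear_combination (-⟪v, y⟫_ℂ) * hsqrt

end RankOne

namespace ContinuousLinearMap.IsPositive

variable {T : H →L[ℂ] H}

theorem norm_inner_sq_le (hT : T.IsPositive) (x y : H) :
    ‖⟪T x, y⟫_ℂ‖ ^ 2 ≤ RCLike.re ⟪T x, x⟫_ℂ * RCLike.re ⟪T y, y⟫_ℂ := by
  have hT₀ : 0 ≤ T := (nonneg_iff_isPositive T).2 hT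
  set S := CFC.sqrt T
  have hS : S.IsPositive := (nonneg_iff_isPositive S).1 (CFC.sqrt_nonneg T)
  have hSS : ∀ x y, ⟪T x, y⟫_ℂ = ⟪S x, S y⟫_ℂ := fun x y => by
    rw [← CFC.sqrt_mul_sqrt_self T hT₀]
    exact hS.inner_left_eq_inner_right _ _
  rw [hSS, hSS, hSS, inner_self_eq_norm_sq, inner_self_eq_norm_sq, ← mul_pow]
  exact pow_le_pow_left₀ (norm_nonneg _) (norm_inner_le_norm _ _) 2

theorem apply_eq_zero_of_le {S : H →L[ℂ] H} (hS : S.IsPositive) (hST : S ≤ T) {x : H}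
    (hx : T x = 0) : S x = 0 := by
  have hre : RCLike.re ⟪S x, x⟫_ℂ = 0 := by
    refine le_antisymm ?_ (hS.re_inner_nonneg_left x)
    simpa [reApplyInnerSelf, inner_sub_left, hx] using hST.re_inner_nonneg_left x
  have hSx := hS.norm_inner_sq_le x (S x)
  rw [hre, zero_mul] at hSx
  exact inner_self_eq_zero.1 (norm_eq_zero.1 (pow_eq_zero_iff two_ne_zero |>.1
    (le_antisymm hSx (by positivity))))

theorem exists_eq_smul_rankOne (hT : T.IsPositive) {v : H}
    (hker : ∀ y, ⟪v, y⟫_ℂ = 0 → T y = 0) : ∃ s : ℝ, 0 ≤ s ∧ T = s • rankOne ℂ v v := by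
  rcases eq_or_ne v 0 with rfl | hv
  · exact ⟨0, le_rfl, by ext y; simp [hker y (inner_zero_left y)]⟩
  have hc : ⟪v, v⟫_ℂ ≠ 0 := inner_self_ne_zero.2 hv
  set w := (⟪v, v⟫_ℂ)⁻¹ • T v
  have hTw : T = rankOne ℂ w v := by
    ext y
    have hperp : ⟪v, y - (⟪v, y⟫_ℂ / ⟪v, v⟫_ℂ) • v⟫_ℂ = 0 := by
      rw [inner_sub_right, inner_smul_right, div_mul_cancel₀ _ hc, sub_self]
    have hTy := hker _ hperp
    rw [map_sub, map_smul, sub_eq_zero] at hTy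
    rw [hTy, rankOne_apply, smul_smul, div_eq_mul_inv]
  have hw : w = (⟪w, v⟫_ℂ / ⟪v, v⟫_ℂ) • v := by
    have h := congrArg (fun S => S v) (hT.isSelfAdjoint.adjoint_eq.trans hTw)
    simp only [hTw, adjoint_rankOne, rankOne_apply] at h
    rw [div_eq_inv_mul, mul_smul, h, inv_smul_smul₀ hc]
  have hμ : 0 ≤ ⟪w, v⟫_ℂ / ⟪v, v⟫_ℂ := by
    refine ((isPositive_rankOne_self v).toLinearMap.isPositive_smul_iff ?_).1 ?_
    · exact coe_injective.ne (a₂ := 0) (by simpa using hv)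
    · rw [hTw, hw, map_smul] at hT
      exact hT.toLinearMap
  obtain ⟨s, hs, hsμ⟩ := RCLike.nonneg_iff_exists_ofReal.1 hμ
  refine ⟨s, hs, ?_⟩
  rw [hTw, hw, map_smul, ← hsμ, RCLike.real_smul_eq_coe_smul (K := ℂ), smul_apply]

theorem exists_eq_smul_rankOne_of_le (hT : T.IsPositive) {e : ℝ} {v : H}
    (hle : T ≤ e • rankOne ℂ v v) : ∃ s : ℝ, 0 ≤ s ∧ T = s • rankOne ℂ v v :=
  hT.exists_eq_smul_rankOne fun y hy => hT.apply_eq_zero_of_le hle (by simp [hy])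

theorem rankOne_apply_le_smul (hT : T.IsPositive) (x : H) :
    rankOne ℂ (T x) (T x) ≤ RCLike.re ⟪T x, x⟫_ℂ • T := by
  refine le_of_re_inner_le (isPositive_rankOne_self _).isSymmetric
    ((nonneg_iff_isPositive _).1
      (smul_nonneg (hT.re_inner_nonneg_left x) ((nonneg_iff_isPositive T).2 hT))).isSymmetric
    fun y => ?_
  rw [re_inner_rankOne_self_apply, re_inner_real_smul_apply]
  exact hT.norm_inner_sq_le x y

end ContinuousLinearMap.IsPositive

-- `Loewner A B` unfolds to Mathlib's Loewner order `A ≤ B`, which is used from here on.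
theorem absCont_of_le_smul {V : Type} [NormedAddCommGroup V] [InnerProductSpace ℂ V]
    {A B : V →L[ℂ] V} (hA : A.IsPositive) {c : ℝ} (hc : 0 ≤ c) (h : A ≤ c • B) : AbsCont A B :=
  ⟨fun _ => A, fun _ => hA, fun _ _ _ => le_refl A, fun _ => ⟨c, hc, h⟩,
    fun _ => tendsto_const_nhds⟩

theorem AbsCont.exists_eq_smul_rankOne {E : H →L[ℂ] H} {v : H}
    (h : AbsCont E (rankOne ℂ v v)) : ∃ s : ℝ, 0 ≤ s ∧ E = s • rankOne ℂ v v := by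
  obtain ⟨f, hfpos, -, hdom, hlim⟩ := h
  have hf : ∀ n, ∃ s : ℝ, 0 ≤ s ∧ f n = s • rankOne ℂ v v := fun n => by
    obtain ⟨_, -, hle⟩ := hdom n
    exact (hfpos n).exists_eq_smul_rankOne_of_le hle
  choose s hs hfs using hf
  rcases eq_or_ne v 0 with rfl | hv
  · refine ⟨0, le_rfl, ext fun x => tendsto_nhds_unique (hlim x) ?_⟩
    simp [hfs]
  set u := rankOne ℂ v v v
  have hemb := isClosedEmbedding_smul_left (𝕜 := ℝ) (c := u) (by simpa [u] using hv)
  have hsu : Tendsto (fun n => s n • u) atTop (𝓝 (E v)) :=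
    (hlim v).congr fun n => by rw [hfs, smul_apply]
  -- the ray `ℝ • u` is closed, so it contains `E v`, and `s` converges to the coordinate of `E v`
  obtain ⟨σ, hσ : σ • u = E v⟩ : E v ∈ Set.range (· • u : ℝ → H) :=
    hemb.isClosed_range.mem_of_tendsto hsu (Eventually.of_forall fun n => ⟨s n, rfl⟩)
  have hsσ : Tendsto s atTop (𝓝 σ) := hemb.tendsto_nhds_iff.2 (by rw [hσ]; exact hsu)
  refine ⟨σ, ge_of_tendsto' hsσ hs, ext fun y => tendsto_nhds_unique (hlim y) ?_⟩
  simpa [hfs] using hsσ.smul_const (rankOne ℂ v v y)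

theorem AbsCont.exists_rankOne_le_smul {w : H} {B : H →L[ℂ] H} (h : AbsCont (rankOne ℂ w w) B) :
    ∃ β : ℝ, 0 ≤ β ∧ rankOne ℂ w w ≤ β • B := by
  set R := rankOne ℂ w w
  rcases eq_or_ne R 0 with hR | hR
  · exact ⟨0, le_rfl, by rw [hR, zero_smul]⟩
  obtain ⟨g, hgpos, hgmono, hgdom, hglim⟩ := h
  obtain ⟨m, hm⟩ : ∃ m, g m ≠ 0 := by
    by_contra! hg
    exact hR (ext fun x => tendsto_nhds_unique (hglim x) (by simp [hg]))
  obtain ⟨t, ht, hgt⟩ := (hgpos m).exists_eq_smul_rankOne_of_le (e := 1)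
    (by rw [one_smul]; exact le_of_tendsto_of_monotone hgmono hglim m)
  have htpos : 0 < t := ht.lt_of_ne (by rintro rfl; exact hm (by rw [hgt, zero_smul]))
  obtain ⟨c, hc, hgc : g m ≤ c • B⟩ := hgdom m
  refine ⟨t⁻¹ * c, by positivity, ?_⟩
  calc R = t⁻¹ • g m := by rw [hgt, inv_smul_smul₀ htpos.ne']
    _ ≤ t⁻¹ • c • B := smul_le_smul_of_nonneg_left hgc (inv_nonneg.2 ht)
    _ = (t⁻¹ * c) • B := smul_smul _ _ _

theorem eq_zero_of_absCont_zero {E : H →L[ℂ] H} (h : AbsCont E 0) : E = 0 := by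
  obtain ⟨s, -, hs⟩ := AbsCont.exists_eq_smul_rankOne (v := (0 : H)) (by simpa using h)
  simpa using hs

def IsAbsContAtom (C : H →L[ℂ] H) : Prop :=
  C ≠ 0 ∧ ∀ D : H →L[ℂ] H, D.IsPositive → AbsCont D C → D = 0 ∨ AbsCont C D

theorem isAbsContAtom_rankOne {v : H} (hv : v ≠ 0) : IsAbsContAtom (rankOne ℂ v v) := by
  refine ⟨by simpa using hv, fun D _ hDv => ?_⟩
  obtain ⟨s, hs, rfl⟩ := hDv.exists_eq_smul_rankOne
  rcases hs.eq_or_lt with rfl | hs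
  · exact .inl (zero_smul _ _)
  · refine .inr (absCont_of_le_smul (isPositive_rankOne_self v) (inv_nonneg.2 hs.le) ?_)
    rw [inv_smul_smul₀ hs.ne']

theorem IsAbsContAtom.exists_eq_rankOne {C : H →L[ℂ] H} (hC : C.IsPositive)
    (h : IsAbsContAtom C) : ∃ w, C = rankOne ℂ w w := by
  obtain ⟨x, hx : C x ≠ 0⟩ := DFunLike.ne_iff.1 h.1
  have hxC := absCont_of_le_smul (isPositive_rankOne_self (C x)) (hC.re_inner_nonneg_left x)
    (hC.rankOne_apply_le_smul x)
  rcases h.2 _ (isPositive_rankOne_self _) hxC with h0 | hCx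
  · exact absurd (by simpa using h0) hx
  · obtain ⟨s, hs, hCs⟩ := hCx.exists_eq_smul_rankOne
    exact ⟨_, hCs.trans (smul_rankOne_self hs _)⟩

theorem singular_iff_forall_isAbsContAtom {A B : H →L[ℂ] H} (hA : A.IsPositive)
    (hB : B.IsPositive) :
    Singular A B ↔
      ∀ C : H →L[ℂ] H, C.IsPositive → IsAbsContAtom C → AbsCont C A → ¬ AbsCont C B := by
  refine ⟨fun hAB C hC hCat hCA hCB => ?_, fun h C hC hCA hCB => ?_⟩
  · obtain ⟨w, rfl⟩ := hCat.exists_eq_rankOne hC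
    obtain ⟨α, hα, hαA⟩ := hCA.exists_rankOne_le_smul
    obtain ⟨β, hβ, hβB⟩ := hCB.exists_rankOne_le_smul
    have hγ : 0 < α + β + 1 := by positivity
    have hR : 0 ≤ rankOne ℂ w w := (nonneg_iff_isPositive _).2 (isPositive_rankOne_self w)
    have hRA := inv_smul_le_of_le_smul ((nonneg_iff_isPositive A).2 hA) (by linarith) hγ hαA
    have hRB := inv_smul_le_of_le_smul ((nonneg_iff_isPositive B).2 hB) (by linarith) hγ hβB
    have hD := hAB _ ((nonneg_iff_isPositive _).1 (smul_nonneg (inv_nonneg.2 hγ.le) hR)) hRA hRB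
    exact hCat.1 ((smul_eq_zero.1 hD).resolve_left (inv_ne_zero hγ.ne'))
  · by_contra hC0
    obtain ⟨x, hx : C x ≠ 0⟩ := DFunLike.ne_iff.1 hC0
    have hr := hC.re_inner_nonneg_left x
    have hxC := hC.rankOne_apply_le_smul x
    exact h _ (isPositive_rankOne_self _) (isAbsContAtom_rankOne hx)
      (absCont_of_le_smul (isPositive_rankOne_self _) hr
        (hxC.trans (smul_le_smul_of_nonneg_left hCA hr)))
      (absCont_of_le_smul (isPositive_rankOne_self _) hr
        (hxC.trans (smul_le_smul_of_nonneg_left hCB hr)))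

def PreservesAbsCont (φ : (H →L[ℂ] H) → (H →L[ℂ] H)) : Prop :=
  ∀ A B : H →L[ℂ] H, A.IsPositive → B.IsPositive → (AbsCont A B ↔ AbsCont (φ A) (φ B))

namespace PreservesAbsCont

variable {φ : (H →L[ℂ] H) → (H →L[ℂ] H)}

theorem map_zero (hac : PreservesAbsCont φ)
    (hbij : Set.BijOn φ {A | A.IsPositive} {A | A.IsPositive}) : φ 0 = 0 := by
  obtain ⟨Z, hZ, hφZ⟩ := hbij.surjOn (isPositive_zero : (0 : H →L[ℂ] H).IsPositive)
  refine eq_zero_of_absCont_zero (hφZ ▸ (hac 0 Z isPositive_zero hZ).1 ?_)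
  exact absCont_of_le_smul isPositive_zero le_rfl (by rw [zero_smul])

theorem map_eq_zero_iff (hac : PreservesAbsCont φ)
    (hbij : Set.BijOn φ {A | A.IsPositive} {A | A.IsPositive}) {C : H →L[ℂ] H}
    (hC : C.IsPositive) : φ C = 0 ↔ C = 0 :=
  ⟨fun h => hbij.injOn hC isPositive_zero (h.trans (hac.map_zero hbij).symm),
    fun h => h ▸ hac.map_zero hbij⟩

theorem isAbsContAtom_map_iff (hac : PreservesAbsCont φ)
    (hbij : Set.BijOn φ {A | A.IsPositive} {A | A.IsPositive}) {C : H →L[ℂ] H}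
    (hC : C.IsPositive) : IsAbsContAtom (φ C) ↔ IsAbsContAtom C := by
  refine and_congr (not_congr (hac.map_eq_zero_iff hbij hC))
    ((hbij.forall (p := fun D' => AbsCont D' (φ C) → D' = 0 ∨ AbsCont (φ C) D')).trans
      (forall₂_congr fun D hD => ?_))
  rw [← hac D C hD hC, ← hac C D hC hD, hac.map_eq_zero_iff hbij hD]

end PreservesAbsCont

theorem stmt4_general
    (φ : (H →L[ℂ] H) → (H →L[ℂ] H))
    (hbij : Set.BijOn φ {A | A.IsPositive} {A | A.IsPositive})
    (hac : ∀ A B : H →L[ℂ] H, A.IsPositive → B.IsPositive →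
        (AbsCont A B ↔ AbsCont (φ A) (φ B))) :
    ∀ A B : H →L[ℂ] H, A.IsPositive → B.IsPositive →
      (Singular A B ↔ Singular (φ A) (φ B)) := by
  intro A B hA hB
  rw [singular_iff_forall_isAbsContAtom hA hB,
    singular_iff_forall_isAbsContAtom (hbij.mapsTo hA) (hbij.mapsTo hB)]
  refine ((hbij.forall (p := fun C' =>
    IsAbsContAtom C' → AbsCont C' (φ A) → ¬ AbsCont C' (φ B))).trans
      (forall₂_congr fun C hC => ?_)).symm
  rw [PreservesAbsCont.isAbsContAtom_map_iff hac hbij hC, ← hac C A hC hA, ← hac C B hC hB]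

/-- A bijection of the positive cone of an infinite-dimensional complex
Hilbert space preserving absolute continuity in both directions preserves singularity
in both directions. -/
theorem stmt4 (hinf : ¬ FiniteDimensional ℂ H)
    (φ : (H →L[ℂ] H) → (H →L[ℂ] H))
    (hbij : Set.BijOn φ {A | A.IsPositive} {A | A.IsPositive})
    (hac : ∀ A B : H →L[ℂ] H, A.IsPositive → B.IsPositive →
        (AbsCont A B ↔ AbsCont (φ A) (φ B))) :
    ∀ A B : H →L[ℂ] H, A.IsPositive → B.IsPositive →
      (Singular A B ↔ Singular (φ A) (φ B)) :=
  stmt4_general φ hbij hac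
end

section
/- Let H be a complex Hilbert space and let φ : B₊(H) → B₊(H) be a bijective map that preserves singularity in both directions. Then for all A, B ∈ B₊(H): ran A^{1/2} = ran B^{1/2} if and only if ran φ(A)^{1/2} = ran φ(B)^{1/2}. -/
/-!
Ando: positive operators `A`, `B` are singular iff `ran A^{1/2} ∩ ran B^{1/2} = 0`. A common
nonzero vector `x = A^{1/2} u = B^{1/2} v` with `‖u‖, ‖v‖ ≤ 1` gives the nonzero rank-one operator
`|x⟩⟨x| = A^{1/2} |u⟩⟨u| A^{1/2} ≤ A` below both; conversely `C ≤ A` gives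
`ran C^{1/2} ⊆ ran A^{1/2}` by Douglas' range criterion. Testing against the projection onto `ℂ x`
then shows that `ran A^{1/2}` is determined by the set of positive operators singular to `A`, and
a bijection of the positive cone preserving singularity in both directions transports that set.
-/

set_option synthInstance.maxHeartbeats 1000000
set_option maxHeartbeats 1000000

open ContinuousLinearMap Filter Topology

variable {H : Type} [NormedAddCommGroup H] [InnerProductSpace ℂ H] [CompleteSpace H]

open InnerProductSpace

theorem IsStarProjection.sqrt_eq_self {R : Type*} [CStarAlgebra R] [PartialOrder R]
    [StarOrderedRing R] {p : R} (hp : IsStarProjection p) : CFC.sqrt p = p :=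
  CFC.sqrt_unique hp.isIdempotentElem.eq hp.nonneg

namespace ContinuousLinearMap

section Douglas

variable {𝕜 E F : Type*} [RCLike 𝕜] [NormedAddCommGroup E] [InnerProductSpace 𝕜 E]
  [CompleteSpace E] [NormedAddCommGroup F] [InnerProductSpace 𝕜 F] [CompleteSpace F]

theorem mem_range_iff_exists_norm_inner_le (T : E →L[𝕜] F) (x : F) :
    x ∈ LinearMap.range (T : E →ₗ[𝕜] F) ↔ ∃ M, ∀ y, ‖inner 𝕜 x y‖ ≤ M * ‖adjoint T y‖ := by
  constructor
  · rintro ⟨u, rfl⟩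
    refine ⟨‖u‖, fun y => ?_⟩
    rw [coe_coe, ← adjoint_inner_right]
    exact norm_inner_le_norm u _
  · rintro ⟨M, hM⟩
    set S : F →ₗ[𝕜] E := (adjoint T).toLinearMap
    have hker : LinearMap.ker S ≤ LinearMap.ker (innerₛₗ 𝕜 x) := fun y hy => by
      have hTy : adjoint T y = 0 := hy
      simpa [hTy] using hM y
    -- the functional `S y ↦ ⟪x, y⟫` on `range S`, well defined by `hker`
    let f : LinearMap.range S →ₗ[𝕜] 𝕜 :=
      (LinearMap.ker S).liftQ (innerₛₗ 𝕜 x) hker ∘ₗ S.quotKerEquivRange.symm.toLinearMap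
    have hf (y : F) : f ⟨S y, LinearMap.mem_range_self S y⟩ = inner 𝕜 x y := by
      simp [f, LinearMap.quotKerEquivRange_symm_apply_image]
    have hbound (z : LinearMap.range S) : ‖f z‖ ≤ M * ‖z‖ := by
      obtain ⟨_, y, rfl⟩ := z
      rw [hf]
      exact hM y
    obtain ⟨g, hg, -⟩ := exists_extension_norm_eq _ (f.mkContinuous M hbound)
    refine ⟨(toDual 𝕜 E).symm g, ext_inner_right 𝕜 fun y => ?_⟩
    rw [coe_coe, ← adjoint_inner_right, toDual_symm_apply]
    exact (hg ⟨S y, LinearMap.mem_range_self S y⟩).trans (hf y)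

end Douglas

variable {A C : H →L[ℂ] H}

theorem inner_sqrt_apply_left (x y : H) :
    inner ℂ (CFC.sqrt A x) y = inner ℂ x (CFC.sqrt A y) :=
  ((nonneg_iff_isPositive _).1 (CFC.sqrt_nonneg A)).inner_left_eq_inner_right x y

theorem norm_sqrt_apply_sq (hA : 0 ≤ A) (y : H) :
    ‖CFC.sqrt A y‖ ^ 2 = RCLike.re (inner ℂ (A y) y) := by
  conv_rhs => rw [← CFC.sqrt_mul_sqrt_self A, mul_apply_eq_comp, inner_sqrt_apply_left]
  exact (inner_self_eq_norm_sq _).symm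

theorem norm_sqrt_apply_le_of_le (hC : 0 ≤ C) (hCA : C ≤ A) (y : H) :
    ‖CFC.sqrt C y‖ ≤ ‖CFC.sqrt A y‖ := by
  refine le_of_sq_le_sq ?_ (norm_nonneg _)
  rw [norm_sqrt_apply_sq hC, norm_sqrt_apply_sq (hC.trans hCA), ← sub_nonneg, ← map_sub,
    ← inner_sub_left]
  exact hCA.re_inner_nonneg_left y

theorem adjoint_sqrt (A : H →L[ℂ] H) : adjoint (CFC.sqrt A) = CFC.sqrt A :=
  (IsSelfAdjoint.of_nonneg (CFC.sqrt_nonneg A)).adjoint_eq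

theorem mem_range_sqrt_iff (A : H →L[ℂ] H) (x : H) :
    x ∈ LinearMap.range (CFC.sqrt A).toLinearMap ↔
      ∃ M, ∀ y, ‖inner ℂ x y‖ ≤ M * ‖CFC.sqrt A y‖ := by
  rw [mem_range_iff_exists_norm_inner_le, adjoint_sqrt]

theorem range_sqrt_mono (hC : 0 ≤ C) (hCA : C ≤ A) :
    LinearMap.range (CFC.sqrt C).toLinearMap ≤ LinearMap.range (CFC.sqrt A).toLinearMap := by
  intro x hx
  rw [mem_range_sqrt_iff] at hx ⊢
  obtain ⟨M, hM⟩ := hx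
  refine ⟨|M|, fun y => (hM y).trans ?_⟩
  calc M * ‖CFC.sqrt C y‖ ≤ |M| * ‖CFC.sqrt C y‖ := by gcongr; exact le_abs_self M
    _ ≤ |M| * ‖CFC.sqrt A y‖ := by gcongr; exact norm_sqrt_apply_le_of_le hC hCA y

theorem rankOne_self_le_one {u : H} (hu : ‖u‖ ≤ 1) : rankOne ℂ u u ≤ 1 := by
  rw [← CStarAlgebra.norm_le_one_iff_of_nonneg _
    ((nonneg_iff_isPositive _).2 (isPositive_rankOne_self u)), norm_rankOne]
  exact mul_le_one₀ hu (norm_nonneg u) hu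

theorem rankOne_sqrt_apply_le (hA : 0 ≤ A) {u : H} (hu : ‖u‖ ≤ 1) :
    rankOne ℂ (CFC.sqrt A u) (CFC.sqrt A u) ≤ A := by
  have hconj : rankOne ℂ (CFC.sqrt A u) (CFC.sqrt A u) =
      CFC.sqrt A * rankOne ℂ u u * CFC.sqrt A := by
    rw [mul_def, mul_def, comp_rankOne, rankOne_comp, adjoint_sqrt]
  calc rankOne ℂ (CFC.sqrt A u) (CFC.sqrt A u) ≤ CFC.sqrt A * 1 * CFC.sqrt A :=
        hconj ▸ conjugate_le_conjugate_of_nonneg (rankOne_self_le_one hu) (CFC.sqrt_nonneg A)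
    _ = A := by rw [mul_one, CFC.sqrt_mul_sqrt_self A]

theorem range_sqrt_starProjection_span (x : H) :
    LinearMap.range (CFC.sqrt (ℂ ∙ x).starProjection).toLinearMap = ℂ ∙ x := by
  rw [isStarProjection_starProjection.sqrt_eq_self, Submodule.range_starProjection]

end ContinuousLinearMap

section Singular

variable {A B : H →L[ℂ] H}

omit [CompleteSpace H] in
theorem singular_iff : Singular A B ↔ ∀ C, 0 ≤ C → C ≤ A → C ≤ B → C = 0 :=
  forall_congr' fun C => by rw [nonneg_iff_isPositive]; rfl

theorem singular_iff_disjoint_range_sqrt (hA : 0 ≤ A) (hB : 0 ≤ B) :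
    Singular A B ↔ Disjoint (LinearMap.range (CFC.sqrt A).toLinearMap)
      (LinearMap.range (CFC.sqrt B).toLinearMap) := by
  rw [singular_iff]
  constructor
  · intro h
    rw [Submodule.disjoint_def]
    rintro x ⟨u, rfl⟩ ⟨v, hv⟩
    simp only [coe_coe] at hv ⊢
    by_contra hx
    set s := max ‖u‖ ‖v‖
    have hs : 0 < s := lt_max_of_lt_left (norm_pos_iff.2 fun hu => hx (by simp [hu]))
    have hball {w : H} (hw : ‖w‖ ≤ s) : ‖(s⁻¹ : ℝ) • w‖ ≤ 1 := by
      rwa [norm_smul, Real.norm_of_nonneg (inv_nonneg.2 hs.le), inv_mul_le_one₀ hs]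
    have hAB : CFC.sqrt A ((s⁻¹ : ℝ) • u) = CFC.sqrt B ((s⁻¹ : ℝ) • v) := by
      rw [map_smul_of_tower, map_smul_of_tower, hv]
    have hx' : CFC.sqrt A ((s⁻¹ : ℝ) • u) ≠ 0 := by
      rw [map_smul_of_tower]
      exact smul_ne_zero (inv_ne_zero hs.ne') hx
    refine rankOne_ne_zero hx' hx' (h _ ((nonneg_iff_isPositive _).2 (isPositive_rankOne_self _))
      (rankOne_sqrt_apply_le hA (hball (le_max_left _ _))) ?_)
    rw [hAB]
    exact rankOne_sqrt_apply_le hB (hball (le_max_right _ _))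
  · intro h C hC hCA hCB
    have hsqrt : LinearMap.range (CFC.sqrt C).toLinearMap = ⊥ :=
      disjoint_self.1 (h.mono (range_sqrt_mono hC hCA) (range_sqrt_mono hC hCB))
    rw [LinearMap.range_eq_bot] at hsqrt
    rw [← CFC.sqrt_eq_zero_iff C]
    exact coe_inj.1 hsqrt

theorem range_sqrt_le_of_singular (hA : 0 ≤ A) (hB : 0 ≤ B)
    (h : ∀ C, 0 ≤ C → Singular C B → Singular C A) :
    LinearMap.range (CFC.sqrt A).toLinearMap ≤ LinearMap.range (CFC.sqrt B).toLinearMap := by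
  intro x hxA
  by_contra hxB
  have hx : x ≠ 0 := by
    rintro rfl
    exact hxB (zero_mem _)
  have hP : 0 ≤ (ℂ ∙ x).starProjection := isStarProjection_starProjection.nonneg
  have hPA := h _ hP <| by
    rwa [singular_iff_disjoint_range_sqrt hP hB, range_sqrt_starProjection_span, disjoint_comm,
      Submodule.disjoint_span_singleton' hx]
  rw [singular_iff_disjoint_range_sqrt hP hA, range_sqrt_starProjection_span, disjoint_comm,
    Submodule.disjoint_span_singleton' hx] at hPA
  exact hPA hxA

theorem range_sqrt_eq_iff_singular (hA : 0 ≤ A) (hB : 0 ≤ B) :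
    Set.range ⇑(CFC.sqrt A) = Set.range ⇑(CFC.sqrt B) ↔
      ∀ C, 0 ≤ C → (Singular C A ↔ Singular C B) := by
  rw [← coe_coe, ← coe_coe, ← LinearMap.coe_range, ← LinearMap.coe_range, SetLike.coe_set_eq]
  refine ⟨fun h C hC => ?_, fun h => le_antisymm ?_ ?_⟩
  · rw [singular_iff_disjoint_range_sqrt hC hA, singular_iff_disjoint_range_sqrt hC hB, h]
  · exact range_sqrt_le_of_singular hA hB fun C hC => (h C hC).2
  · exact range_sqrt_le_of_singular hB hA fun C hC => (h C hC).1

end Singular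

/-- A bijection of the positive cone preserving singularity in both
directions preserves equality of ranges of square roots in both directions. -/
theorem stmt9 (φ : (H →L[ℂ] H) → (H →L[ℂ] H))
    (hbij : Set.BijOn φ {A | A.IsPositive} {A | A.IsPositive})
    (hsing : ∀ A B : H →L[ℂ] H, A.IsPositive → B.IsPositive →
        (Singular A B ↔ Singular (φ A) (φ B))) :
    ∀ A B : H →L[ℂ] H, A.IsPositive → B.IsPositive →
      (Set.range ⇑(CFC.sqrt A) = Set.range ⇑(CFC.sqrt B) ↔
        Set.range ⇑(CFC.sqrt (φ A)) = Set.range ⇑(CFC.sqrt (φ B))) := by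
  simp_rw [← nonneg_iff_isPositive] at hbij hsing ⊢
  intro A B hA hB
  rw [range_sqrt_eq_iff_singular hA hB,
    range_sqrt_eq_iff_singular (hbij.mapsTo hA) (hbij.mapsTo hB)]
  refine Iff.trans ?_ hbij.forall.symm
  exact forall₂_congr fun C hC => by rw [hsing C A hC hA, hsing C B hC hB]
end

section
/- Let H be a complex Hilbert space and let M and N be operator ranges in H. Then M ⊆ N if and only if every operator range K in H satisfying K ∩ N = {0} also satisfies K ∩ M = {0}. -/
open ContinuousLinearMap Filter Topology

variable {H : Type} [NormedAddCommGroup H] [InnerProductSpace ℂ H] [CompleteSpace H]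

/-! If `x ∈ M` but `x ∉ N`, the line `ℂ ∙ x` is an operator range (the range of its
orthogonal projection) that meets `N` trivially but not `M`. -/

theorem isOpRange_of_hasOrthogonalProjection {E : Type} [NormedAddCommGroup E]
    [InnerProductSpace ℂ E] (K : Submodule ℂ E) [K.HasOrthogonalProjection] : IsOpRange K :=
  ⟨K.starProjection, K.range_starProjection⟩

theorem stmt10_general (M N : Submodule ℂ H) :
    M ≤ N ↔ ∀ K : Submodule ℂ H, IsOpRange K → K ⊓ N = ⊥ → K ⊓ M = ⊥ := by
  refine ⟨fun hMN K _ hKN => eq_bot_mono (inf_le_inf_left K hMN) hKN, fun h => ?_⟩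
  by_contra hMN
  obtain ⟨x, hxM, hxN⟩ := SetLike.not_le_iff_exists.mp hMN
  have hline : (ℂ ∙ x) ⊓ N = ⊥ := (Submodule.disjoint_span_singleton_of_notMem hxN).symm.eq_bot
  have hx : x ∈ (ℂ ∙ x) ⊓ M := ⟨Submodule.mem_span_singleton_self x, hxM⟩
  rw [h _ (isOpRange_of_hasOrthogonalProjection _) hline, Submodule.mem_bot] at hx
  exact hxN (hx ▸ N.zero_mem)

/-- For operator ranges `M, N`: `M ⊆ N` iff every operator range `K`
with `K ∩ N = {0}` also satisfies `K ∩ M = {0}`. -/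
theorem stmt10 (M N : Submodule ℂ H) (hM : IsOpRange M) (hN : IsOpRange N) :
    M ≤ N ↔ ∀ K : Submodule ℂ H, IsOpRange K → K ⊓ N = ⊥ → K ⊓ M = ⊥ :=
  stmt10_general M N
end

section
/- Let H be an infinite-dimensional complex Hilbert space and let T : H → H be a bijective linear map that maps the set of all closed subspaces of codimension 1 in H onto itself (i.e., for every closed subspace M of codimension 1, T(M) is a closed subspace of codimension 1, and every closed subspace of codimension 1 arises as such an image). Then T is bounded. -/
open ContinuousLinearMap Filter Topology

variable {H : Type} [NormedAddCommGroup H] [InnerProductSpace ℂ H] [CompleteSpace H]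

/-!
A closed hyperplane of `H` is the kernel of a nonzero continuous functional `g`. Since `T` is
injective and every closed hyperplane is the image under `T` of a closed subspace, the kernel of
`g ∘ T` is closed, so `g ∘ T` is continuous for every `g`. If `uₙ → x` and `T uₙ → y`, then
`g y = g (T x)` for all `g`, hence `y = T x`: the graph of `T` is closed, and the closed graph
theorem applies.
-/

theorem Module.Dual.finrank_quotient_ker_eq_one {K V : Type*} [Field K] [AddCommGroup V]
    [Module K V] {f : Module.Dual K V} (hf : f ≠ 0) :
    Module.finrank K (V ⧸ LinearMap.ker f) = 1 := by
  rw [f.quotKerEquivRange.finrank_eq, range_eq_top_of_ne_zero hf, finrank_top,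
    Module.finrank_self]

theorem LinearMap.continuous_comp_of_ker_eq_map {𝕜 E F : Type*} [NontriviallyNormedField 𝕜]
    [CompleteSpace 𝕜] [AddCommGroup E] [TopologicalSpace E] [IsTopologicalAddGroup E]
    [Module 𝕜 E] [ContinuousSMul 𝕜 E] [AddCommGroup F] [Module 𝕜 F]
    {T : E →ₗ[𝕜] F} (hT : Function.Injective T) {g : Module.Dual 𝕜 F} {M : Submodule 𝕜 E}
    (hM : IsClosed (M : Set E)) (hker : M.map T = LinearMap.ker g) :
    Continuous (g ∘ₗ T) := by
  rw [LinearMap.continuous_iff_isClosed_ker, LinearMap.ker_comp, ← hker,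
    Submodule.comap_map_eq_of_injective hT]
  exact hM

theorem LinearMap.continuous_of_forall_continuous_dual_comp {𝕜 E F : Type*}
    [NontriviallyNormedField 𝕜] [NormedAddCommGroup E] [NormedSpace 𝕜 E] [CompleteSpace E]
    [NormedAddCommGroup F] [NormedSpace 𝕜 F] [CompleteSpace F] [SeparatingDual 𝕜 F]
    (T : E →ₗ[𝕜] F) (h : ∀ g : StrongDual 𝕜 F, Continuous (g ∘ T)) : Continuous T := by
  refine T.continuous_of_seq_closed_graph fun u x y hux hTuy => ?_
  refine (SeparatingDual.eq_iff_forall_dual_eq (R := 𝕜)).mpr fun g => ?_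
  exact tendsto_nhds_unique ((g.continuous.tendsto y).comp hTuy)
    (((h g).tendsto x).comp hux)

theorem stmt14_general
    (T : H →ₗ[ℂ] H) (hbij : Function.Bijective T)
    (honto : ∀ N : Submodule ℂ H, IsClosed (N : Set H) → Module.finrank ℂ (H ⧸ N) = 1 →
      ∃ M : Submodule ℂ H, IsClosed (M : Set H) ∧ Module.finrank ℂ (H ⧸ M) = 1 ∧
        M.map T = N) :
    Continuous T := by
  refine T.continuous_of_forall_continuous_dual_comp fun g => ?_
  rcases eq_or_ne g 0 with rfl | hg
  · exact continuous_const
  have hg' : (g : Module.Dual ℂ H) ≠ 0 := by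
    simpa [ContinuousLinearMap.ext_iff, LinearMap.ext_iff] using hg
  obtain ⟨M, hM, -, hMker⟩ := honto _ g.isClosed_ker
    (Module.Dual.finrank_quotient_ker_eq_one hg')
  exact LinearMap.continuous_comp_of_ker_eq_map hbij.1 hM hMker

/-- A bijective linear map of an infinite-dimensional complex Hilbert
space mapping the set of closed hyperplanes (closed subspaces of codimension 1) onto
itself is bounded (continuous). -/
theorem stmt14 (hinf : ¬ FiniteDimensional ℂ H)
    (T : H →ₗ[ℂ] H) (hbij : Function.Bijective T)
    (hmap : ∀ M : Submodule ℂ H, IsClosed (M : Set H) → Module.finrank ℂ (H ⧸ M) = 1 →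
      IsClosed ((M.map T : Submodule ℂ H) : Set H) ∧
        Module.finrank ℂ (H ⧸ (M.map T)) = 1)
    (honto : ∀ N : Submodule ℂ H, IsClosed (N : Set H) → Module.finrank ℂ (H ⧸ N) = 1 →
      ∃ M : Submodule ℂ H, IsClosed (M : Set H) ∧ Module.finrank ℂ (H ⧸ M) = 1 ∧
        M.map T = N) :
    Continuous T :=
  stmt14_general T hbij honto
end

section
/- Let H be a complex Hilbert space, let T : H → H be a bounded, invertible, linear operator, let A, B ∈ B₊(H), let Y_A, Y_B be bounded invertible operators on H, and let A', B' ∈ B₊(H) satisfy (A')^{1/2} = T A^{1/2} T* Y_A and (B')^{1/2} = T B^{1/2} T* Y_B. For positive operators C, D define 𝒟_{C,D} := {x ∈ H : C^{1/2} x ∈ ran D^{1/2}}. Then 𝒟_{A',B'} = (T* Y_A)^{-1}(𝒟_{A,B}); in particular, 𝒟_{A,B} is dense in H if and only if 𝒟_{A',B'} is dense in H. -/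
set_option synthInstance.maxHeartbeats 1000000
set_option maxHeartbeats 1000000

open ContinuousLinearMap Filter Topology

variable {H : Type} [NormedAddCommGroup H] [InnerProductSpace ℂ H] [CompleteSpace H]

/-- The set `𝒟_{C,D} = {x : C^{1/2} x ∈ ran D^{1/2}}`. -/
def domSet (C D : H →L[ℂ] H) : Set H :=
  {x : H | CFC.sqrt C x ∈ Set.range ⇑(CFC.sqrt D)}

theorem ContinuousLinearMap.isUnit_adjoint {𝕜 E : Type*} [RCLike 𝕜] [NormedAddCommGroup E]
    [InnerProductSpace 𝕜 E] [CompleteSpace E] (T : E ≃L[𝕜] E) :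
    IsUnit (adjoint (T : E →L[𝕜] E)) := by
  rw [← star_eq_adjoint]
  exact T.toUnit.isUnit.star

theorem ContinuousLinearMap.dense_preimage_iff_of_isUnit {R M : Type*} [Semiring R]
    [TopologicalSpace M] [AddCommMonoid M] [Module R M] {S : M →L[R] M} (hS : IsUnit S)
    {s : Set M} : Dense (S ⁻¹' s) ↔ Dense s := by
  obtain ⟨u, rfl⟩ := hS
  exact (ContinuousLinearEquiv.ofUnit u).toHomeomorph.isOpenQuotientMap.dense_preimage_iff

theorem domSet_eq_preimage_of_sqrt_eq {A B A' B' T S R : H →L[ℂ] H}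
    (hT : Function.Injective T) (hR : Function.Surjective R)
    (hA : CFC.sqrt A' = T * CFC.sqrt A * S) (hB : CFC.sqrt B' = T * CFC.sqrt B * R) :
    domSet A' B' = S ⁻¹' domSet A B := by
  have hrange : Set.range ⇑(CFC.sqrt B') = T '' Set.range ⇑(CFC.sqrt B) := by
    rw [hB, mul_def, mul_def, coe_comp, coe_comp, Set.range_comp, hR.range_eq, Set.image_univ,
      Set.range_comp]
  ext x
  simp only [domSet, Set.mem_ofPred_eq, Set.mem_preimage, hrange, hA]
  exact hT.mem_set_image

theorem stmt16_general (T : H ≃L[ℂ] H)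
    (A B A' B' : H →L[ℂ] H)
    (YA YB : H →L[ℂ] H) (hYA : IsUnit YA) (hYB : IsUnit YB)
    (h1 : CFC.sqrt A' = (T : H →L[ℂ] H) * CFC.sqrt A * adjoint (T : H →L[ℂ] H) * YA)
    (h2 : CFC.sqrt B' = (T : H →L[ℂ] H) * CFC.sqrt B * adjoint (T : H →L[ℂ] H) * YB) :
    domSet A' B' = ⇑(adjoint (T : H →L[ℂ] H) * YA) ⁻¹' domSet A B ∧
      (Dense (domSet A B) ↔ Dense (domSet A' B')) := by
  have hTadj := ContinuousLinearMap.isUnit_adjoint T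
  have hmain : domSet A' B' = ⇑(adjoint (T : H →L[ℂ] H) * YA) ⁻¹' domSet A B :=
    domSet_eq_preimage_of_sqrt_eq T.injective
      (isUnit_iff_bijective.mp (hTadj.mul hYB)).2 (by rw [h1, mul_assoc]) (by rw [h2, mul_assoc])
  refine ⟨hmain, ?_⟩
  rw [hmain, dense_preimage_iff_of_isUnit (hTadj.mul hYA)]

/-- If `(A')^{1/2} = T A^{1/2} T* Y_A` and `(B')^{1/2} = T B^{1/2} T* Y_B`
with `T` bounded invertible linear and `Y_A, Y_B` bounded invertible, then
`𝒟_{A',B'} = (T* Y_A)⁻¹(𝒟_{A,B})`; in particular `𝒟_{A,B}` is dense iff `𝒟_{A',B'}`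
is dense. -/
theorem stmt16 (T : H ≃L[ℂ] H)
    (A B A' B' : H →L[ℂ] H)
    (hA : A.IsPositive) (hB : B.IsPositive) (hA' : A'.IsPositive) (hB' : B'.IsPositive)
    (YA YB : H →L[ℂ] H) (hYA : IsUnit YA) (hYB : IsUnit YB)
    (h1 : CFC.sqrt A' = (T : H →L[ℂ] H) * CFC.sqrt A * adjoint (T : H →L[ℂ] H) * YA)
    (h2 : CFC.sqrt B' = (T : H →L[ℂ] H) * CFC.sqrt B * adjoint (T : H →L[ℂ] H) * YB) :
    domSet A' B' = ⇑(adjoint (T : H →L[ℂ] H) * YA) ⁻¹' domSet A B ∧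
      (Dense (domSet A B) ↔ Dense (domSet A' B')) :=
  stmt16_general T A B A' B' YA YB hYA hYB h1 h2
end
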